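/- arXiv:1402.1694 — 2 statements merged into one kernel-verified Lean document; each statement's English description precedes it below -/
import Mathlib

section
/- Let p(θ) = Σ_{i=1}^k α_i φ_{μ_i,Σ_i}(θ) be a mixture of Gaussian densities on ℝ^d with weights α_i > 0 summing to 1, arbitrary means μ_i ∈ ℝ^d, and positive definite covariance matrices Σ_i satisfying vᵀΣ₁v > vᵀΣ_i v for all nonzero v ∈ ℝ^d and all i ≠ 1. Then the dominant component determines the tail of the mixture: lim_{r→∞} sup_{‖θ‖≥r} | log p(θ) − log φ_{μ₁,Σ₁}(θ) − log α₁ | = 0; equivalently, p(θ)/(α₁ φ_{μ₁,Σ₁}(θ)) → 1 as ‖θ‖ → ∞. -/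
open MeasureTheory Matrix Filter

/-- The Euclidean norm on `Fin d → ℝ`. -/
noncomputable def enorm2 {d : ℕ} (x : Fin d → ℝ) : ℝ := Real.sqrt (∑ i, (x i) ^ 2)

/-- The `d`-dimensional Gaussian density with mean `m` and covariance matrix `S`. -/
noncomputable def gaussDensity2 {d : ℕ} (m : Fin d → ℝ) (S : Matrix (Fin d) (Fin d) ℝ)
    (θ : Fin d → ℝ) : ℝ :=
  (2 * Real.pi) ^ (-(d : ℝ) / 2) * S.det ^ (-(1 : ℝ) / 2) *
    Real.exp (-(1 / 2) * ((θ - m) ⬝ᵥ (S⁻¹.mulVec (θ - m))))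

/-!
For `i ≠ 0` the ratio `φ_{μᵢ,Σᵢ}(θ) / φ_{μ₀,Σ₀}(θ)` is a constant times `exp (-Qᵢ(θ)/2)`, where
`Qᵢ(θ) = (θ - μᵢ)ᵀΣᵢ⁻¹(θ - μᵢ) - (θ - μ₀)ᵀΣ₀⁻¹(θ - μ₀)` is a quadratic polynomial with leading
matrix `Σᵢ⁻¹ - Σ₀⁻¹`. Inversion reverses the strict Loewner order `Σᵢ < Σ₀`, so this matrix is
positive definite, `Qᵢ(θ) → ∞` as `‖θ‖ → ∞`, and every ratio tends to `0`. Hence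
`log p - log φ_{μ₀,Σ₀} - log α₀ = log (1 + ∑ᵢ (αᵢ/α₀) φ_{μᵢ,Σᵢ}/φ_{μ₀,Σ₀}) → log 1 = 0`,
uniformly on `{‖θ‖ ≥ r}` as `r → ∞`.
-/

open Topology

section EuclideanNorm

variable {d : ℕ}

lemma enorm2_eq_norm_toLp (x : Fin d → ℝ) : enorm2 x = ‖WithLp.toLp 2 x‖ := by
  simp [enorm2, EuclideanSpace.norm_eq]

lemma enorm2_sq (x : Fin d → ℝ) : enorm2 x ^ 2 = x ⬝ᵥ x := by
  rw [enorm2, Real.sq_sqrt (by positivity)]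
  simp [dotProduct, sq]

lemma abs_dotProduct_le_enorm2_mul (x y : Fin d → ℝ) : |x ⬝ᵥ y| ≤ enorm2 x * enorm2 y := by
  simpa [enorm2_eq_norm_toLp, EuclideanSpace.inner_toLp_toLp, dotProduct_comm] using
    abs_real_inner_le_norm (WithLp.toLp 2 x) (WithLp.toLp 2 y)

lemma enorm2_sub_enorm2_le (x y : Fin d → ℝ) : enorm2 x - enorm2 y ≤ enorm2 (x - y) := by
  simpa [enorm2_eq_norm_toLp] using norm_sub_norm_le (WithLp.toLp 2 x) (WithLp.toLp 2 y)

lemma tendsto_sub_const_comap_enorm2 (m : Fin d → ℝ) :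
    Tendsto (fun x => x - m) (comap enorm2 atTop) (comap enorm2 atTop) :=
  tendsto_comap_iff.2 <| tendsto_atTop_mono (fun x => enorm2_sub_enorm2_le x m) <|
    tendsto_atTop_add_const_right _ _ tendsto_comap

end EuclideanNorm

namespace Matrix

variable {n : Type*} [Fintype n] [DecidableEq n]

lemma PosSemidef.dotProduct_mulVec_mul_le {M : Matrix n n ℝ} (hM : M.PosSemidef) (x y : n → ℝ) :
    (x ⬝ᵥ M *ᵥ y) * (y ⬝ᵥ M *ᵥ x) ≤ (x ⬝ᵥ M *ᵥ x) * (y ⬝ᵥ M *ᵥ y) := by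
  simpa only [toBilin'_apply'] using (toBilin' M).apply_mul_apply_le_of_forall_zero_le
    (fun v => by simpa [toBilin'_apply'] using hM.dotProduct_mulVec_nonneg v) x y

omit [DecidableEq n] in
lemma IsHermitian.dotProduct_mulVec_comm {M : Matrix n n ℝ} (hM : M.IsHermitian) (x y : n → ℝ) :
    x ⬝ᵥ M *ᵥ y = y ⬝ᵥ M *ᵥ x := by
  rw [← dotProduct_transpose_mulVec, ← conjTranspose_eq_transpose_of_trivial, hM.eq]

lemma PosDef.exists_pos_mul_dotProduct_le {M : Matrix n n ℝ} (hM : M.PosDef) :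
    ∃ c > 0, ∀ x : n → ℝ, c * (x ⬝ᵥ x) ≤ x ⬝ᵥ M *ᵥ x := by
  cases isEmpty_or_nonempty n
  · exact ⟨1, one_pos, fun x => by simp [Subsingleton.elim x 0]⟩
  open scoped MatrixOrder in
  obtain ⟨c, hc, hcM⟩ : ∃ c > 0, algebraMap ℝ _ c ≤ M :=
    (CFC.exists_pos_algebraMap_le_iff hM.isHermitian.isSelfAdjoint).2 fun _ hx =>
      hM.isStrictlyPositive.spectrum_pos hx
  refine ⟨c, hc, fun x => ?_⟩
  simpa [Algebra.algebraMap_eq_smul_one, sub_mulVec, smul_mulVec] using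
    (le_iff.1 hcM).dotProduct_mulVec_nonneg x

lemma posDef_inv_sub_inv {A B : Matrix n n ℝ} (hA : A.PosDef) (hB : B.PosDef)
    (hAB : ∀ v : n → ℝ, v ≠ 0 → v ⬝ᵥ A *ᵥ v < v ⬝ᵥ B *ᵥ v) : (A⁻¹ - B⁻¹).PosDef := by
  refine .of_dotProduct_mulVec_pos (hA.isHermitian.inv.sub hB.isHermitian.inv) fun x hx => ?_
  have mulVec_inv (M : Matrix n n ℝ) (hM : M.PosDef) : M *ᵥ (M⁻¹ *ᵥ x) = x := by
    rw [mulVec_mulVec, mul_nonsing_inv _ hM.det_pos.ne'.isUnit, one_mulVec]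
  set y := B⁻¹ *ᵥ x
  have hy : y ≠ 0 := fun h => hx <| by
    rw [← mulVec_inv B hB]
    exact (congrArg (B *ᵥ ·) h).trans (mulVec_zero B)
  -- `b = xᵀB⁻¹x = yᵀBy` dominates `a = yᵀAy`, and Cauchy–Schwarz for `A` gives `b² ≤ a · xᵀA⁻¹x`.
  have hb : x ⬝ᵥ B⁻¹ *ᵥ x = y ⬝ᵥ B *ᵥ y := by
    rw [dotProduct_comm y, mulVec_inv B hB]
  have hCS := hA.posSemidef.dotProduct_mulVec_mul_le y (A⁻¹ *ᵥ x)
  rw [mulVec_inv A hA, hA.isHermitian.dotProduct_mulVec_comm (A⁻¹ *ᵥ x), mulVec_inv A hA,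
    dotProduct_comm y, dotProduct_comm (A⁻¹ *ᵥ x)] at hCS
  have hya := hA.posSemidef.dotProduct_mulVec_nonneg y
  have hyb := hB.dotProduct_mulVec_pos hy
  have hxA := hA.inv.posSemidef.dotProduct_mulVec_nonneg x
  simp only [star_trivial] at hya hyb hxA
  rw [star_trivial, sub_mulVec, dotProduct_sub, sub_pos, hb]
  nlinarith [hAB y hy]

end Matrix

lemma tendsto_dotProduct_mulVec_add_dotProduct_atTop {d : ℕ} {G : Matrix (Fin d) (Fin d) ℝ}
    (hG : G.PosDef) (v : Fin d → ℝ) :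
    Tendsto (fun x => x ⬝ᵥ G *ᵥ x + x ⬝ᵥ v) (comap enorm2 atTop) atTop := by
  obtain ⟨c, hc, hcG⟩ := hG.exists_pos_mul_dotProduct_le
  have hbound (x : Fin d → ℝ) :
      enorm2 x * (c * enorm2 x - enorm2 v) ≤ x ⬝ᵥ G *ᵥ x + x ⬝ᵥ v := by
    have hquad := hcG x
    rw [← enorm2_sq] at hquad
    nlinarith [neg_abs_le (x ⬝ᵥ v), abs_dotProduct_le_enorm2_mul x v]
  have hgrowth : Tendsto (fun s : ℝ => s * (c * s - enorm2 v)) atTop atTop :=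
    tendsto_id.atTop_mul_atTop₀ (tendsto_atTop_add_const_right _ _ (tendsto_id.const_mul_atTop hc))
  exact tendsto_atTop_mono hbound (hgrowth.comp tendsto_comap)

lemma dotProduct_mulVec_sub_dotProduct_mulVec_add {n : Type*} [Fintype n]
    (P Q : Matrix n n ℝ) (u w : n → ℝ) :
    u ⬝ᵥ P *ᵥ u - (u + w) ⬝ᵥ Q *ᵥ (u + w) =
      u ⬝ᵥ (P - Q) *ᵥ u + u ⬝ᵥ -(Q *ᵥ w + Qᵀ *ᵥ w) - w ⬝ᵥ Q *ᵥ w := by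
  simp only [mulVec_add, add_dotProduct, dotProduct_add, sub_mulVec, dotProduct_sub,
    dotProduct_neg, dotProduct_transpose_mulVec]
  ring

lemma tendsto_gaussExponent_sub_atTop {d : ℕ} (mA mB : Fin d → ℝ)
    {A B : Matrix (Fin d) (Fin d) ℝ} (hAB : (A⁻¹ - B⁻¹).PosDef) :
    Tendsto (fun θ => (θ - mA) ⬝ᵥ A⁻¹ *ᵥ (θ - mA) - (θ - mB) ⬝ᵥ B⁻¹ *ᵥ (θ - mB))
      (comap enorm2 atTop) atTop := by
  set w := mA - mB
  have hexpand (θ : Fin d → ℝ) :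
      (θ - mA) ⬝ᵥ A⁻¹ *ᵥ (θ - mA) - (θ - mB) ⬝ᵥ B⁻¹ *ᵥ (θ - mB) =
        ((θ - mA) ⬝ᵥ (A⁻¹ - B⁻¹) *ᵥ (θ - mA) + (θ - mA) ⬝ᵥ -(B⁻¹ *ᵥ w + B⁻¹ᵀ *ᵥ w)) +
          -(w ⬝ᵥ B⁻¹ *ᵥ w) := by
    rw [← sub_add_sub_cancel θ mA mB, dotProduct_mulVec_sub_dotProduct_mulVec_add,
      sub_eq_add_neg]
  exact (tendsto_atTop_add_const_right _ _ <|
    (tendsto_dotProduct_mulVec_add_dotProduct_atTop hAB _).comp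
      (tendsto_sub_const_comap_enorm2 mA)).congr fun θ => (hexpand θ).symm

lemma gaussDensity2_pos {d : ℕ} (m : Fin d → ℝ) {S : Matrix (Fin d) (Fin d) ℝ} (hS : S.PosDef)
    (θ : Fin d → ℝ) : 0 < gaussDensity2 m S θ := by
  have := hS.det_pos
  unfold gaussDensity2
  positivity

lemma gaussDensity2_div_gaussDensity2 {d : ℕ} (mA mB : Fin d → ℝ)
    (A B : Matrix (Fin d) (Fin d) ℝ) (θ : Fin d → ℝ) :
    gaussDensity2 mA A θ / gaussDensity2 mB B θ =
      A.det ^ (-(1 : ℝ) / 2) / B.det ^ (-(1 : ℝ) / 2) *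
        Real.exp (-(1 / 2) * ((θ - mA) ⬝ᵥ A⁻¹ *ᵥ (θ - mA) - (θ - mB) ⬝ᵥ B⁻¹ *ᵥ (θ - mB))) := by
  have hπ : (2 * Real.pi) ^ (-(d : ℝ) / 2) ≠ 0 := by positivity
  rw [gaussDensity2, gaussDensity2, mul_div_mul_comm, mul_div_mul_comm, div_self hπ, one_mul,
    ← Real.exp_sub, mul_sub]

lemma tendsto_gaussDensity2_div_gaussDensity2 {d : ℕ} (mA mB : Fin d → ℝ)
    {A B : Matrix (Fin d) (Fin d) ℝ} (hAB : (A⁻¹ - B⁻¹).PosDef) :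
    Tendsto (fun θ => gaussDensity2 mA A θ / gaussDensity2 mB B θ) (comap enorm2 atTop) (𝓝 0) := by
  simp_rw [gaussDensity2_div_gaussDensity2]
  have hexp := Real.tendsto_exp_atBot.comp <|
    (tendsto_const_mul_atBot_of_neg (by norm_num : -(1 / 2 : ℝ) < 0)).2
      (tendsto_gaussExponent_sub_atTop mA mB hAB)
  simpa using hexp.const_mul (A.det ^ (-(1 : ℝ) / 2) / B.det ^ (-(1 : ℝ) / 2))

lemma tendsto_iSup_abs_of_tendsto_comap {X : Type*} (N g : X → ℝ)
    (hg : Tendsto g (comap N atTop) (𝓝 0)) :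
    Tendsto (fun r : ℝ => ⨆ x : {x // r ≤ N x}, |g x|) atTop (𝓝 0) := by
  rw [(atTop_basis.comap N).tendsto_iff Metric.nhds_basis_closedBall] at hg
  rw [atTop_basis.tendsto_iff Metric.nhds_basis_closedBall]
  intro ε hε
  obtain ⟨R, -, hR⟩ := hg ε hε
  refine ⟨R, trivial, fun r hr => ?_⟩
  have hsup : (⨆ x : {x // r ≤ N x}, |g x|) ≤ ε := Real.iSup_le (fun x => by
    simpa using hR x (le_trans (Set.mem_Ici.1 hr) x.2)) hε.le
  simpa [abs_of_nonneg (Real.iSup_nonneg fun _ => abs_nonneg _)] using hsup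

lemma log_sum_mul_sub_log_sub_log {k : ℕ} (a f : Fin (k + 1) → ℝ) (ha : ∀ i, 0 < a i)
    (hf : ∀ i, 0 < f i) :
    Real.log (∑ i, a i * f i) - Real.log (f 0) - Real.log (a 0) =
      Real.log (1 + ∑ i : Fin k, a i.succ / a 0 * (f i.succ / f 0)) := by
  have ha₀ := ha 0
  have hf₀ := hf 0
  have hfactor :
      ∑ i, a i * f i = a 0 * f 0 * (1 + ∑ i : Fin k, a i.succ / a 0 * (f i.succ / f 0)) := by
    rw [Fin.sum_univ_succ, mul_add, mul_one, Finset.mul_sum]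
    congr 1
    refine Finset.sum_congr rfl fun i _ => ?_
    field_simp
  have hbracket : 0 < 1 + ∑ i : Fin k, a i.succ / a 0 * (f i.succ / f 0) :=
    add_pos_of_pos_of_nonneg one_pos <| Finset.sum_nonneg fun i _ =>
      mul_nonneg (div_pos (ha _) ha₀).le (div_pos (hf _) hf₀).le
  rw [hfactor, Real.log_mul (by positivity) hbracket.ne', Real.log_mul ha₀.ne' hf₀.ne']
  ring

theorem gaussian_mixture_dominant_tail_general {d k : ℕ}
    (α : Fin (k + 1) → ℝ) (hα_pos : ∀ i, 0 < α i)
    (μs : Fin (k + 1) → (Fin d → ℝ))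
    (Sig : Fin (k + 1) → Matrix (Fin d) (Fin d) ℝ) (hSig_pos : ∀ i, (Sig i).PosDef)
    (hdom : ∀ v : Fin d → ℝ, v ≠ 0 → ∀ i, i ≠ 0 →
      v ⬝ᵥ ((Sig i).mulVec v) < v ⬝ᵥ ((Sig 0).mulVec v))
    (p : (Fin d → ℝ) → ℝ) (hp : ∀ θ, p θ = ∑ i, α i * gaussDensity2 (μs i) (Sig i) θ) :
    Filter.Tendsto
      (fun r : ℝ => ⨆ θ : {θ : Fin d → ℝ // r ≤ enorm2 θ},
        |Real.log (p θ) - Real.log (gaussDensity2 (μs 0) (Sig 0) θ) - Real.log (α 0)|)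
      Filter.atTop (nhds 0) := by
  have hφ_pos (i θ) : 0 < gaussDensity2 (μs i) (Sig i) θ := gaussDensity2_pos _ (hSig_pos i) θ
  have hratio (i : Fin k) : Tendsto
      (fun θ => gaussDensity2 (μs i.succ) (Sig i.succ) θ / gaussDensity2 (μs 0) (Sig 0) θ)
      (comap enorm2 atTop) (𝓝 0) :=
    tendsto_gaussDensity2_div_gaussDensity2 _ _ <| posDef_inv_sub_inv (hSig_pos _) (hSig_pos 0)
      fun v hv => hdom v hv _ i.succ_ne_zero
  refine tendsto_iSup_abs_of_tendsto_comap enorm2 (fun θ => Real.log (p θ) -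
    Real.log (gaussDensity2 (μs 0) (Sig 0) θ) - Real.log (α 0)) ?_
  simp_rw [hp, log_sum_mul_sub_log_sub_log α _ hα_pos (hφ_pos · _)]
  simpa using ((tendsto_finsetSum _ fun i _ => (hratio i).const_mul (α i.succ / α 0)).const_add
    1).log (by simp)

/-- In a Gaussian mixture whose first component has strictly dominant
covariance, the dominant component determines the tail of the mixture:
`sup_{‖θ‖ ≥ r} |log p(θ) - log φ_{μ₁,Σ₁}(θ) - log α₁| → 0` as `r → ∞`. -/
theorem gaussian_mixture_dominant_tail {d k : ℕ}
    (α : Fin (k + 1) → ℝ) (hα_pos : ∀ i, 0 < α i) (hα_sum : ∑ i, α i = 1)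
    (μs : Fin (k + 1) → (Fin d → ℝ))
    (Sig : Fin (k + 1) → Matrix (Fin d) (Fin d) ℝ) (hSig_pos : ∀ i, (Sig i).PosDef)
    (hdom : ∀ v : Fin d → ℝ, v ≠ 0 → ∀ i, i ≠ 0 →
      v ⬝ᵥ ((Sig i).mulVec v) < v ⬝ᵥ ((Sig 0).mulVec v))
    (p : (Fin d → ℝ) → ℝ) (hp : ∀ θ, p θ = ∑ i, α i * gaussDensity2 (μs i) (Sig i) θ) :
    Filter.Tendsto
      (fun r : ℝ => ⨆ θ : {θ : Fin d → ℝ // r ≤ enorm2 θ},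
        |Real.log (p θ) - Real.log (gaussDensity2 (μs 0) (Sig 0) θ) - Real.log (α 0)|)
      Filter.atTop (nhds 0) :=
  gaussian_mixture_dominant_tail_general α hα_pos μs Sig hSig_pos hdom p hp
end

section
/- On ℝ^d, let p_∞(θ) = exp(−θᵀAθ) with A symmetric positive definite, and suppose ℓ : ℝ^d → [0,∞) is a probability density such that there exist constants C, ε₀ > 0 and x₀ ≥ 0 with ℓ(x) ≤ C·p_∞(x)^{1/(1+ε₀)} for all ‖x‖ ≥ x₀. Then for every fixed 0 < 𝒴 < ∞, sup_{x∈ℝ^d} p_∞(x)^{−1/(2(1+ε₀))} · ∫_{[−𝒴,𝒴]^d} ℓ(y − x) dy < ∞; that is, the function x ↦ V_ε(x)·L(x, [−𝒴,𝒴]^d) is uniformly bounded, where V_ε(x) = p_∞(x)^{−1/(2(1+ε₀))} and L(x,·) is the translation-invariant kernel with density y ↦ ℓ(y−x). -/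
/-!
Write `q θ = θᵀAθ`, so `p_∞ = exp (-q)`. Since `A` is positive semidefinite, the parallelogram
identity gives `q x ≤ 2 q y + 2 q (y - x)`. Hence for `y` in the box `K` and `‖x‖` large
(so that `ℓ (y - x)` is dominated) `V_ε(x) ℓ(y - x) ≤ C exp ((q x / 2 - q (y - x)) / (1 + ε₀))`
is at most `C exp (q y / (1 + ε₀))`, which is bounded on `K`; integrating over `K` bounds
`V_ε(x) L(x, K)`. For `x` in a compact ball `V_ε` is bounded and `L(x, K) ≤ 1`.
-/

open MeasureTheory Matrix

/-- The Euclidean norm on `Fin d → ℝ`. -/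
noncomputable def enorm5 {d : ℕ} (x : Fin d → ℝ) : ℝ := Real.sqrt (∑ i, (x i) ^ 2)

section EuclideanNorm

variable {d : ℕ}

lemma enorm5_eq_norm_toLp (x : Fin d → ℝ) : enorm5 x = ‖WithLp.toLp 2 x‖ := by
  simp only [enorm5, EuclideanSpace.norm_eq, Real.norm_eq_abs, sq_abs]

lemma continuous_enorm5 : Continuous (enorm5 : (Fin d → ℝ) → ℝ) :=
  (PiLp.continuous_toLp 2 _).norm.congr fun x => (enorm5_eq_norm_toLp x).symm

lemma isCompact_setOf_enorm5_le (r : ℝ) : IsCompact {x : Fin d → ℝ | enorm5 x ≤ r} := by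
  have hset : {x : Fin d → ℝ | enorm5 x ≤ r} =
      WithLp.toLp 2 ⁻¹' Metric.closedBall (0 : EuclideanSpace ℝ (Fin d)) r := by
    ext x
    simp [enorm5_eq_norm_toLp]
  rw [hset]
  exact (PiLp.homeomorph 2 _).symm.isCompact_preimage.2 (isCompact_closedBall _ _)

lemma enorm5_le_add_enorm5_sub (x y : Fin d → ℝ) : enorm5 x ≤ enorm5 y + enorm5 (y - x) := by
  simpa only [enorm5_eq_norm_toLp, WithLp.toLp_sub] using
    norm_le_norm_add_norm_sub (WithLp.toLp 2 y) (WithLp.toLp 2 x)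

end EuclideanNorm

theorem Matrix.PosSemidef.dotProduct_mulVec_sub_le {n : Type*} [Fintype n] {A : Matrix n n ℝ}
    (hA : A.PosSemidef) (a b : n → ℝ) :
    (a - b) ⬝ᵥ A *ᵥ (a - b) ≤ 2 * (a ⬝ᵥ A *ᵥ a) + 2 * (b ⬝ᵥ A *ᵥ b) := by
  have hab := hA.dotProduct_mulVec_nonneg (a + b)
  simp only [star_trivial, mulVec_add, mulVec_sub, dotProduct_add, add_dotProduct,
    dotProduct_sub, sub_dotProduct] at hab ⊢
  linarith

theorem mul_setIntegral_le_mul_measureReal {X : Type*} [MeasurableSpace X] {μ : Measure X}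
    {s : Set X} (hs : μ s < ⊤) {f : X → ℝ} (hf0 : ∀ y ∈ s, 0 ≤ f y) {c B : ℝ} (hc : 0 ≤ c)
    (h : ∀ y ∈ s, c * f y ≤ B) : c * ∫ y in s, f y ∂μ ≤ B * μ.real s := by
  rw [← integral_const_mul]
  refine (Real.le_norm_self _).trans (norm_setIntegral_le_of_norm_le_const hs fun y hy => ?_)
  rw [Real.norm_eq_abs, abs_of_nonneg (mul_nonneg hc (hf0 y hy))]
  exact h y hy

section TranslationInvariant

variable {E : Type*} [AddGroup E] [MeasurableSpace E] [MeasurableAdd E] {μ : Measure E}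
  [μ.IsAddRightInvariant]

theorem setIntegral_comp_sub_le_integral {ℓ : E → ℝ} (hℓ0 : ∀ x, 0 ≤ ℓ x) (hℓ : Integrable ℓ μ)
    (s : Set E) (x : E) : ∫ y in s, ℓ (y - x) ∂μ ≤ ∫ y, ℓ y ∂μ :=
  (setIntegral_le_integral (hℓ.comp_sub_right x)
    (Filter.Eventually.of_forall fun _ => hℓ0 _)).trans_eq (integral_sub_right_eq_self ℓ x)

theorem exists_forall_mul_setIntegral_comp_sub_le [TopologicalSpace E]
    [IsFiniteMeasureOnCompacts μ] {V ℓ : E → ℝ} (hV : Continuous V) (hV0 : ∀ x, 0 ≤ V x)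
    (hℓ0 : ∀ x, 0 ≤ ℓ x) (hℓ : Integrable ℓ μ) {K S : Set E} (hK : IsCompact K)
    (hS : IsCompact S) {B : ℝ} (hfar : ∀ x ∉ S, ∀ y ∈ K, V x * ℓ (y - x) ≤ B) :
    ∃ M, ∀ x, V x * ∫ y in K, ℓ (y - x) ∂μ ≤ M := by
  obtain ⟨M, hM⟩ := hS.bddAbove_image hV.continuousOn
  refine ⟨max (M * ∫ y, ℓ y ∂μ) (B * μ.real K), fun x => ?_⟩
  by_cases hx : x ∈ S
  · refine le_max_of_le_left ?_
    calc V x * ∫ y in K, ℓ (y - x) ∂μ ≤ V x * ∫ y, ℓ y ∂μ :=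
          mul_le_mul_of_nonneg_left (setIntegral_comp_sub_le_integral hℓ0 hℓ K x) (hV0 x)
      _ ≤ M * ∫ y, ℓ y ∂μ :=
          mul_le_mul_of_nonneg_right (hM ⟨x, hx, rfl⟩) (integral_nonneg hℓ0)
  · exact le_max_of_le_right <|
      mul_setIntegral_le_mul_measureReal hK.measure_lt_top (fun _ _ => hℓ0 _) (hV0 x) (hfar x hx)

end TranslationInvariant

theorem uniform_bound_Veps_times_proposal_mass_general {d : ℕ}
    (A : Matrix (Fin d) (Fin d) ℝ) (hA_pos : A.PosDef)
    (pinf : (Fin d → ℝ) → ℝ)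
    (hpinf : ∀ θ, pinf θ = Real.exp (-(θ ⬝ᵥ (A.mulVec θ))))
    (ℓ : (Fin d → ℝ) → ℝ) (hℓ_nonneg : ∀ x, 0 ≤ ℓ x)
    (hℓ_prob : ∫ x, ℓ x = 1)
    (C ε₀ x₀ : ℝ) (hC : 0 < C) (hε₀ : 0 < ε₀)
    (hdom : ∀ x, x₀ ≤ enorm5 x → ℓ x ≤ C * (pinf x) ^ ((1 : ℝ) / (1 + ε₀)))
    (𝒴 : ℝ) :
    ∃ M : ℝ, ∀ x : Fin d → ℝ,
      (pinf x) ^ (-(1 / (2 * (1 + ε₀)))) *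
        ∫ y in (Set.univ.pi fun _ : Fin d => Set.Icc (-𝒴) 𝒴), ℓ (y - x) ≤ M := by
  set q : (Fin d → ℝ) → ℝ := fun θ => θ ⬝ᵥ A *ᵥ θ
  have hq : Continuous q := by fun_prop
  have hpow : ∀ θ r, pinf θ ^ r = Real.exp (-q θ * r) := fun θ r => by
    rw [hpinf, ← Real.exp_mul]
  have hK : IsCompact (Set.univ.pi fun _ : Fin d => Set.Icc (-𝒴) 𝒴) :=
    isCompact_univ_pi fun _ => isCompact_Icc
  obtain ⟨R, hR⟩ := hK.bddAbove_image continuous_enorm5.continuousOn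
  obtain ⟨B, hB⟩ := hK.bddAbove_image hq.continuousOn
  have hℓ_int : Integrable ℓ := .of_integral_ne_zero (by rw [hℓ_prob]; exact one_ne_zero)
  refine exists_forall_mul_setIntegral_comp_sub_le (S := {x | enorm5 x ≤ x₀ + R})
    (B := C * Real.exp (B / (1 + ε₀))) ?_ (fun x => ?_) hℓ_nonneg hℓ_int hK
    (isCompact_setOf_enorm5_le _) fun x hx y hy => ?_
  · simp_rw [hpow]; fun_prop
  · rw [hpow]; exact (Real.exp_pos _).le
  rw [Set.mem_ofPred_eq, not_le] at hx
  have hy_far : x₀ ≤ enorm5 (y - x) := by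
    linarith [enorm5_le_add_enorm5_sub x y, hR ⟨y, hy, rfl⟩]
  have hsplit : q x ≤ 2 * q y + 2 * q (y - x) := by
    simpa only [sub_sub_cancel] using hA_pos.posSemidef.dotProduct_mulVec_sub_le y (y - x)
  calc pinf x ^ (-(1 / (2 * (1 + ε₀)))) * ℓ (y - x)
      ≤ pinf x ^ (-(1 / (2 * (1 + ε₀)))) * (C * pinf (y - x) ^ ((1 : ℝ) / (1 + ε₀))) := by
        rw [hpow]; gcongr; exact hdom _ hy_far
    _ = C * Real.exp ((q x / 2 - q (y - x)) / (1 + ε₀)) := by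
        rw [hpow, hpow, mul_left_comm, ← Real.exp_add]; congr 2; field_simp; ring
    _ ≤ C * Real.exp (B / (1 + ε₀)) := by
        gcongr; linarith [hB ⟨y, hy, rfl⟩]

/-- If a probability density `ℓ` on `ℝ^d` is dominated at infinity by
`p_∞^{1/(1+ε₀)}` where `p_∞(θ) = exp(-θᵀAθ)` with `A` symmetric positive definite, then
`x ↦ V_ε(x) · L(x, [-𝒴, 𝒴]^d)` is uniformly bounded, where `V_ε(x) = p_∞(x)^{-1/(2(1+ε₀))}`
and `L` is the translation-invariant kernel with density `y ↦ ℓ(y - x)`. -/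
theorem uniform_bound_Veps_times_proposal_mass {d : ℕ}
    (A : Matrix (Fin d) (Fin d) ℝ) (hA_symm : A.IsSymm) (hA_pos : A.PosDef)
    (pinf : (Fin d → ℝ) → ℝ)
    (hpinf : ∀ θ, pinf θ = Real.exp (-(θ ⬝ᵥ (A.mulVec θ))))
    (ℓ : (Fin d → ℝ) → ℝ) (hℓ_nonneg : ∀ x, 0 ≤ ℓ x) (hℓ_meas : Measurable ℓ)
    (hℓ_prob : ∫ x, ℓ x = 1)
    (C ε₀ x₀ : ℝ) (hC : 0 < C) (hε₀ : 0 < ε₀) (hx₀ : 0 ≤ x₀)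
    (hdom : ∀ x, x₀ ≤ enorm5 x → ℓ x ≤ C * (pinf x) ^ ((1 : ℝ) / (1 + ε₀)))
    (𝒴 : ℝ) (h𝒴 : 0 < 𝒴) :
    ∃ M : ℝ, ∀ x : Fin d → ℝ,
      (pinf x) ^ (-(1 / (2 * (1 + ε₀)))) *
        ∫ y in (Set.univ.pi fun _ : Fin d => Set.Icc (-𝒴) 𝒴), ℓ (y - x) ≤ M :=
  uniform_bound_Veps_times_proposal_mass_general A hA_pos pinf hpinf ℓ hℓ_nonneg hℓ_prob C ε₀ x₀ hC
    hε₀ hdom 𝒴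
end
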